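/- (Bruhat filtration for l-spaces.) Let an l-group G act continuously on an l-space X, and let χ : G → ℂˣ be a character. Suppose ∅ = U₀ ⊆ U₁ ⊆ ⋯ ⊆ U_l = X is a chain of open G-invariant subsets such that for every 1 ≤ i ≤ l the locally closed stratum X_i := U_i \ U_{i−1} (with its subspace topology, again an l-space) satisfies D(X_i)^{G,χ} = 0. Then D(X)^{G,χ} = 0. -/

import Mathlib

/-!
By induction on `i`, `T` kills every test function supported in `U i`. In the inductive step,
restriction to the stratum `U (i+1) \ U i` maps the test functions supported in `U (i+1)` onto
`S(U (i+1) \ U i)` (cover the support by compact clopen sets on which the function is constant,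
and glue), and two functions with the same restriction agree off `U i`. Hence `T` descends to a
`(G, χ)`-equivariant distribution on the stratum, which vanishes by hypothesis.
-/

open scoped Classical

noncomputable section

/-- The space `S(X)` of compactly supported locally constant `ℂ`-valued functions
on a topological space `X`, as a `ℂ`-submodule of `X → ℂ`. -/
def SSp (X : Type*) [TopologicalSpace X] : Submodule ℂ (X → ℂ) where
  carrier := {f | IsLocallyConstant f ∧ HasCompactSupport f}
  add_mem' := fun hf hg => ⟨hf.1.add hg.1, hf.2.add hg.2⟩
  zero_mem' := ⟨IsLocallyConstant.const 0, by
    simpa using (HasCompactSupport.zero : HasCompactSupport (fun _ : X => (0:ℂ)))⟩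
  smul_mem' := fun c f hf =>
    ⟨hf.1.comp fun y => c • y, by simpa [Pi.smul_def, Pi.mul_def] using hf.2.smul_left (f := fun _ : X => c)⟩

/-- The space `D(X) = S(X)*` of distributions on `X`. -/
abbrev Dst (X : Type*) [TopologicalSpace X] := SSp X →ₗ[ℂ] ℂ

/-- `T ∈ D(X)^{G,χ}`: the distribution `T` on `X` is `(G,χ)`-equivariant for the
action of `G` on `X`, i.e. `g·T = χ(g)·T` where `(g·T)(f) = T(x ↦ f(g·x))`. -/
def IsEqvDist {X : Type*} [TopologicalSpace X] {G : Type*} [SMul G X]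
    (χ : G → ℂ) (T : Dst X) : Prop :=
  ∀ (g : G) (f₁ f₂ : SSp X), (∀ x, f₂.1 x = f₁.1 (g • x)) → T f₂ = χ g * T f₁

/-- `T ∈ D(Y)^{G,χ}` for a `G`-invariant subset `Y ⊆ X` (with the subspace topology
and the restricted action): `g·T = χ(g)·T` where `(g·T)(f) = T(y ↦ f(g·y))`. -/
def IsEqvDistOn {X : Type*} [TopologicalSpace X] {G : Type*} [SMul G X]
    (Y : Set X) (χ : G → ℂ) (T : Dst Y) : Prop :=
  ∀ (g : G) (f₁ f₂ : SSp Y),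
    (∀ (x : X) (hx : x ∈ Y) (hgx : g • x ∈ Y), f₂.1 ⟨x, hx⟩ = f₁.1 ⟨g • x, hgx⟩) →
    T f₂ = χ g * T f₁

open Function Set

theorem LinearMap.exists_comp_eq_of_surjective {R M M₂ M₃ : Type*} [Semiring R]
    [AddCommMonoid M] [AddCommMonoid M₂] [AddCommMonoid M₃] [Module R M] [Module R M₂]
    [Module R M₃] {f : M →ₗ[R] M₂} (hf : Surjective f) {g : M →ₗ[R] M₃}
    (hfg : ∀ x y, f x = f y → g x = g y) : ∃ g' : M₂ →ₗ[R] M₃, g' ∘ₗ f = g := by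
  refine ⟨⟨⟨g ∘ surjInv hf, fun y₁ y₂ => ?_⟩, fun c y => ?_⟩,
    LinearMap.ext fun x => hfg _ _ (surjInv_eq hf _)⟩
  · change g (surjInv hf (y₁ + y₂)) = g (surjInv hf y₁) + g (surjInv hf y₂)
    rw [← map_add]
    exact hfg _ _ (by rw [map_add, surjInv_eq hf, surjInv_eq hf, surjInv_eq hf])
  · change g (surjInv hf (c • y)) = c • g (surjInv hf y)
    rw [← map_smul]
    exact hfg _ _ (by rw [map_smul, surjInv_eq hf, surjInv_eq hf])

theorem IsLocallyConstant.isClopen_support {X M : Type*} [TopologicalSpace X] [Zero M]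
    {f : X → M} (hf : IsLocallyConstant f) : IsClopen (support f) :=
  (hf.isClopen_fiber 0).compl

theorem IsLocallyConstant.piecewise {X Y : Type*} [TopologicalSpace X] {V : Set X}
    [DecidablePred (· ∈ V)] (hV : IsClopen V) {f g : X → Y} (hf : IsLocallyConstant f)
    (hg : IsLocallyConstant g) : IsLocallyConstant (V.piecewise f g) := by
  refine (IsLocallyConstant.iff_eventually_eq _).2 fun x => ?_
  by_cases hx : x ∈ V
  · filter_upwards [hV.isOpen.mem_nhds hx, hf.eventually_eq x] with y hy hfy
    simp [hx, hy, hfy]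
  · filter_upwards [hV.isClosed.isOpen_compl.mem_nhds hx, hg.eventually_eq x] with y hy hgy
    simp [hx, show y ∉ V from hy, hgy]

theorem IsLocallyConstant.exists_forall_eq_of_isClopen {X M ι : Type*} [TopologicalSpace X]
    [Zero M] {V : ι → Set X} (hV : ∀ i, IsClopen (V i)) (c : ι → M) (t : Finset ι) :
    ∃ F : X → M, IsLocallyConstant F ∧ (∀ x ∉ ⋃ i ∈ t, V i, F x = 0) ∧
      ∀ x ∈ ⋃ i ∈ t, V i, ∃ i, x ∈ V i ∧ F x = c i := by
  induction t using Finset.induction_on with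
  | empty => exact ⟨0, .const 0, fun _ _ => rfl, by simp⟩
  | insert a t _ ih =>
    obtain ⟨F, hF, hF_out, hF_in⟩ := ih
    refine ⟨(V a).piecewise (const X (c a)) F, ?_, fun x hx => ?_, fun x hx => ?_⟩
    · exact (IsLocallyConstant.const (c a)).piecewise (hV a) hF
    · simp only [Finset.mem_insert, iUnion_iUnion_eq_or_left, mem_union, not_or] at hx
      simp [hx.1, hF_out x hx.2]
    · by_cases hxa : x ∈ V a
      · exact ⟨a, hxa, by simp [hxa]⟩
      · simp only [Finset.mem_insert, iUnion_iUnion_eq_or_left, mem_union, hxa, false_or] at hx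
        simpa [hxa] using hF_in x hx

theorem exists_isClopen_isCompact_mem_subset {X : Type*} [TopologicalSpace X]
    [LocallyCompactSpace X] [T2Space X] [TotallyDisconnectedSpace X]
    {x : X} {O : Set X} (hO : IsOpen O) (hx : x ∈ O) :
    ∃ V : Set X, IsClopen V ∧ IsCompact V ∧ x ∈ V ∧ V ⊆ O := by
  obtain ⟨s, hs, hxs, hsO⟩ := exists_compact_subset hO hx
  obtain ⟨V, hV, hxV, hVs⟩ :=
    loc_compact_Haus_tot_disc_of_zero_dim.mem_nhds_iff.1 (isOpen_interior.mem_nhds hxs)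
  exact ⟨V, hV, hs.of_isClosed_subset hV.1 (hVs.trans interior_subset), hxV,
    (hVs.trans interior_subset).trans hsO⟩

namespace SSp

variable {X : Type*} [TopologicalSpace X]

theorem isCompact_support (F : SSp X) : IsCompact (support F.1) :=
  F.2.2.of_isClosed_subset F.2.1.isClopen_support.1 subset_closure

theorem comp_homeomorph_mem {Y : Type*} [TopologicalSpace Y] (F : SSp X) (e : Y ≃ₜ X) :
    F.1 ∘ e ∈ SSp Y :=
  ⟨F.2.1.comp_continuous e.continuous, F.2.2.comp_homeomorph e⟩

/-- The image of `S(O)` in `S(X)` under extension by zero (for `O` open). -/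
def supportedIn (O : Set X) : Submodule ℂ (SSp X) where
  carrier := {F | ∀ x ∉ O, F.1 x = 0}
  add_mem' hF hG x hx := by simp [hF x hx, hG x hx]
  zero_mem' _ _ := rfl
  smul_mem' c F hF x hx := by simp [hF x hx]

theorem supportedIn_empty : supportedIn (∅ : Set X) = ⊥ :=
  eq_bot_iff.2 fun _ hF => Subtype.ext <| funext fun x => hF x (notMem_empty x)

theorem supportedIn_univ : supportedIn (univ : Set X) = ⊤ :=
  eq_top_iff.2 fun _ _ x hx => absurd (mem_univ x) hx

/-- `C` is open so that the restricted support stays compact. -/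
def restrict (O : Set X) {C : Set X} (hC : IsOpen C) : supportedIn O →ₗ[ℂ] SSp ↥(O \ C) where
  toFun F := ⟨fun y => F.1.1 y, F.1.2.1.comp_continuous continuous_subtype_val, by
    have hsub : support F.1.1 \ C ⊆ range ((↑) : ↥(O \ C) → X) := fun x ⟨hx, hxC⟩ =>
      ⟨⟨x, not_imp_comm.1 (F.2 x) hx, hxC⟩, rfl⟩
    refine .intro' (K := (↑) ⁻¹' (support F.1.1 \ C)) ?_
      ((F.1.2.1.isClopen_support.1.sdiff hC).preimage continuous_subtype_val)
      fun y hy => not_not.1 fun hFy => hy ⟨hFy, y.2.2⟩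
    rw [Subtype.isCompact_iff, image_preimage_eq_of_subset hsub]
    exact (isCompact_support F.1).diff hC⟩
  map_add' _ _ := rfl
  map_smul' _ _ := rfl

theorem eqOn_compl_of_restrict_eq {O C : Set X} (hC : IsOpen C) {F F' : supportedIn O}
    (h : restrict O hC F = restrict O hC F') : ∀ x ∉ C, F.1.1 x = F'.1.1 x := by
  intro x hxC
  by_cases hxO : x ∈ O
  · exact congr_fun (congr_arg Subtype.val h) ⟨x, hxO, hxC⟩
  · rw [F.2 x hxO, F'.2 x hxO]

theorem apply_eq_of_eqOn_compl {C : Set X} {T : Dst X} (hCT : supportedIn C ≤ LinearMap.ker T)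
    {F F' : SSp X} (h : ∀ x ∉ C, F.1 x = F'.1 x) : T F = T F' :=
  sub_eq_zero.1 <| by
    rw [← map_sub]
    exact hCT fun x hx => sub_eq_zero.2 (h x hx)

theorem restrict_surjective [LocallyCompactSpace X] [T2Space X] [TotallyDisconnectedSpace X]
    {O C : Set X} (hO : IsOpen O) (hC : IsOpen C) : Surjective (restrict O hC) := by
  intro f
  have hnhds : ∀ y : ↥(O \ C), ∃ V : Set X, IsClopen V ∧ IsCompact V ∧ (y : X) ∈ V ∧ V ⊆ O ∧
      ∀ z : ↥(O \ C), (z : X) ∈ V → f.1 z = f.1 y := by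
    intro y
    obtain ⟨W, hW, hWf⟩ := isOpen_induced_iff.1 (f.2.1.isOpen_fiber (f.1 y))
    have hyW : (y : X) ∈ W := show y ∈ (↑) ⁻¹' W from hWf ▸ rfl
    obtain ⟨V, hV, hV_cpt, hyV, hVW⟩ :=
      exists_isClopen_isCompact_mem_subset (hW.inter hO) ⟨hyW, y.2.1⟩
    exact ⟨V, hV, hV_cpt, hyV, hVW.trans inter_subset_right,
      fun z hz => show z ∈ {z | f.1 z = f.1 y} from hWf ▸ (hVW hz).1⟩
  choose V hV hV_cpt hV_mem hVO hV_const using hnhds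
  obtain ⟨t, ht⟩ := ((isCompact_support f).image continuous_subtype_val).elim_finite_subcover V
    (fun y => (hV y).isOpen) fun _ ⟨y, _, hyx⟩ => mem_iUnion.2 ⟨y, hyx ▸ hV_mem y⟩
  obtain ⟨F, hF, hF_out, hF_in⟩ :=
    IsLocallyConstant.exists_forall_eq_of_isClopen hV (fun y => f.1 y) t
  have hF_cpt : HasCompactSupport F := .intro (t.isCompact_biUnion fun y _ => hV_cpt y) hF_out
  refine ⟨⟨⟨F, hF, hF_cpt⟩, fun x hxO => hF_out x fun hx => ?_⟩, Subtype.ext <| funext fun z => ?_⟩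
  · obtain ⟨y, -, hxy⟩ := mem_iUnion₂.1 hx
    exact hxO (hVO y hxy)
  · change F z = f.1 z
    by_cases hz : (z : X) ∈ ⋃ y ∈ t, V y
    · obtain ⟨y, hzy, hFz⟩ := hF_in z hz
      rw [hFz, hV_const y z hzy]
    · rw [hF_out z hz]
      exact (notMem_support.1 fun h => hz (ht ⟨z, h, rfl⟩)).symm

end SSp

section Equivariance

variable {X G : Type*} [Group G] [MulAction G X]

theorem smul_mem_iff_of_forall_smul_mem {s : Set X} (hs : ∀ (g : G) x, x ∈ s → g • x ∈ s)
    (g : G) (x : X) : g • x ∈ s ↔ x ∈ s :=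
  ⟨fun h => by simpa using hs g⁻¹ _ h, hs g x⟩

variable [TopologicalSpace X] [ContinuousConstSMul G X]

theorem SSp.isEqvDistOn_of_comp_restrict {O C : Set X} (hC : IsOpen C)
    (hO_inv : ∀ (g : G) x, x ∈ O → g • x ∈ O) (hC_inv : ∀ (g : G) x, x ∈ C → g • x ∈ C)
    (hres : Surjective (restrict O hC)) {χ : G → ℂ} {T : Dst X} (hT : IsEqvDist χ T)
    {S : Dst ↥(O \ C)} (hS : S ∘ₗ restrict O hC = T ∘ₗ (supportedIn O).subtype) :
    IsEqvDistOn (O \ C) χ S := by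
  intro g f₁ f₂ hf
  obtain ⟨F₁, rfl⟩ := hres f₁
  let F₂ : supportedIn O := ⟨⟨F₁.1.1 ∘ Homeomorph.smul g, comp_homeomorph_mem F₁.1 _⟩,
    fun x hx => F₁.2 _ ((smul_mem_iff_of_forall_smul_mem hO_inv g x).not.2 hx)⟩
  have hF₂ : restrict O hC F₂ = f₂ := Subtype.ext <| funext fun y => (hf y y.2 <| by
    simpa only [mem_sdiff, smul_mem_iff_of_forall_smul_mem hO_inv,
      smul_mem_iff_of_forall_smul_mem hC_inv] using y.2).symm
  calc S f₂ = T F₂ := hF₂ ▸ LinearMap.congr_fun hS F₂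
    _ = χ g * T F₁ := hT g F₁.1 F₂.1 fun _ => rfl
    _ = χ g * S (restrict O hC F₁) := congrArg _ (LinearMap.congr_fun hS F₁).symm

theorem SSp.supportedIn_le_ker_of_stratum [LocallyCompactSpace X] [T2Space X]
    [TotallyDisconnectedSpace X] {O C : Set X} (hO : IsOpen O) (hC : IsOpen C)
    (hO_inv : ∀ (g : G) x, x ∈ O → g • x ∈ O) (hC_inv : ∀ (g : G) x, x ∈ C → g • x ∈ C)
    {χ : G → ℂ} {T : Dst X} (hT : IsEqvDist χ T) (hCT : supportedIn C ≤ LinearMap.ker T)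
    (hstratum : ∀ S : Dst ↥(O \ C), IsEqvDistOn (O \ C) χ S → S = 0) :
    supportedIn O ≤ LinearMap.ker T := by
  have hres : Surjective (restrict O hC) := restrict_surjective hO hC
  obtain ⟨S, hS⟩ : ∃ S : Dst ↥(O \ C), S ∘ₗ restrict O hC = T ∘ₗ (supportedIn O).subtype :=
    LinearMap.exists_comp_eq_of_surjective hres fun F F' h =>
      apply_eq_of_eqOn_compl hCT (eqOn_compl_of_restrict_eq hC h)
  have hS0 : S = 0 := hstratum S (isEqvDistOn_of_comp_restrict hC hO_inv hC_inv hres hT hS)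
  intro F hF
  have hTF : T F = S (restrict O hC ⟨F, hF⟩) := (LinearMap.congr_fun hS ⟨F, hF⟩).symm
  rw [LinearMap.mem_ker, hTF, hS0, LinearMap.zero_apply]

end Equivariance

theorem stmt3_general
    (G : Type*) [Group G] [TopologicalSpace G]
    (X : Type*) [TopologicalSpace X] [LocallyCompactSpace X] [T2Space X]
    [TotallyDisconnectedSpace X]
    [MulAction G X] [ContinuousSMul G X]
    (χ : G →* ℂˣ)
    (l : ℕ) (U : Fin (l + 1) → Set X)
    (hUopen : ∀ i, IsOpen (U i))
    (hU0 : U 0 = ∅) (hUl : U (Fin.last l) = Set.univ)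
    (hUinv : ∀ (i : Fin (l + 1)) (g : G) (x : X), x ∈ U i → g • x ∈ U i)
    (hstrata : ∀ i : Fin l, ∀ T : Dst ↥(U i.succ \ U i.castSucc),
      IsEqvDistOn (U i.succ \ U i.castSucc) (fun g => (χ g : ℂ)) T → T = 0)
    (T : Dst X) (hT : IsEqvDist (fun g => (χ g : ℂ)) T) : T = 0 := by
  have hU_ker : ∀ i, SSp.supportedIn (U i) ≤ LinearMap.ker T := by
    intro i
    induction i using Fin.induction with
    | zero => simp [hU0, SSp.supportedIn_empty]
    | succ i ih =>
      exact SSp.supportedIn_le_ker_of_stratum (hUopen _) (hUopen _) (hUinv _) (hUinv _) hT ih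
        (hstrata i)
  simpa [hUl, SSp.supportedIn_univ] using hU_ker (Fin.last l)

/-- Bruhat filtration for l-spaces: if an l-group `G` acts continuously on
an l-space `X` stratified by a chain of open `G`-invariant subsets
`∅ = U₀ ⊆ U₁ ⊆ ⋯ ⊆ U_l = X` such that each stratum `Xᵢ = Uᵢ \ Uᵢ₋₁` satisfies
`D(Xᵢ)^{G,χ} = 0`, then `D(X)^{G,χ} = 0`. -/
theorem stmt3
    (G : Type*) [Group G] [TopologicalSpace G] [IsTopologicalGroup G]
    [LocallyCompactSpace G] [T2Space G] [TotallyDisconnectedSpace G]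
    (X : Type*) [TopologicalSpace X] [LocallyCompactSpace X] [T2Space X]
    [TotallyDisconnectedSpace X]
    [MulAction G X] [ContinuousSMul G X]
    (χ : G →* ℂˣ)
    (l : ℕ) (U : Fin (l + 1) → Set X)
    (hUopen : ∀ i, IsOpen (U i)) (hUmono : Monotone U)
    (hU0 : U 0 = ∅) (hUl : U (Fin.last l) = Set.univ)
    (hUinv : ∀ (i : Fin (l + 1)) (g : G) (x : X), x ∈ U i → g • x ∈ U i)
    (hstrata : ∀ i : Fin l, ∀ T : Dst ↥(U i.succ \ U i.castSucc),
      IsEqvDistOn (U i.succ \ U i.castSucc) (fun g => (χ g : ℂ)) T → T = 0)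
    (T : Dst X) (hT : IsEqvDist (fun g => (χ g : ℂ)) T) : T = 0 :=
  stmt3_general G X χ l U hUopen hU0 hUl hUinv hstrata T hT
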